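/- arXiv:math/0202230 — 5 statements merged into one kernel-verified Lean document; each statement's English description precedes it below -/
import Mathlib

section
/- Nonsymmetric Lovász Local Lemma: if A_1,…,A_n are events with dependency digraph D, and x_1,…,x_n ∈ [0,1) satisfy Pr[A_i] ≤ x_i ∏_{(i,j)∈E(D)} (1 - x_j) for all i, then Pr[⋂ᵢ ¬A_i] > 0. -/
open MeasureTheory Finset

/-- The event `B` is mutually independent of the family of events `A j`: for every
finite subfamily and every choice of each event or its complement, the probability of
the intersection with `B` factors. -/
def MutuallyIndepOf {Ω : Type*} [MeasurableSpace Ω] (μ : Measure Ω) (B : Set Ω)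
    {ι : Type*} (A : ι → Set Ω) : Prop :=
  ∀ (J : Finset ι) (σ : ι → Bool),
    μ (B ∩ ⋂ j ∈ J, (if σ j then A j else (A j)ᶜ))
      = μ B * μ (⋂ j ∈ J, (if σ j then A j else (A j)ᶜ))

/-!
By strong induction on `S`, `Pr[A i ∣ ⋂_{j ∈ S} ¬A j] ≤ x i` whenever `i ∉ S`: split `S` into
the out-neighbours `T = S ∩ D i` of `i` and the rest `R`. Independence of `A i` from `R` bounds
the numerator by `Pr[A i] · Pr[⋂_R ¬A j]`, while adjoining the events of `T` one at a time and
applying the induction hypothesis shows `Pr[⋂_S ¬A j] ≥ ∏_T (1 - x j) · Pr[⋂_R ¬A j]`.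
The same chain argument with `R = ∅` and `T` everything gives
`Pr[⋂ᵢ ¬A i] ≥ ∏ᵢ (1 - x i) > 0`.
-/

lemma MutuallyIndepOf.measure_inter_biInter_compl {Ω ι : Type*} [MeasurableSpace Ω]
    {μ : Measure Ω} {B : Set Ω} {A : ι → Set Ω} {p : ι → Prop}
    (h : MutuallyIndepOf μ B fun j : {j // p j} => A j.1) {S : Finset ι} (hS : ∀ j ∈ S, p j) :
    μ (B ∩ ⋂ j ∈ S, (A j)ᶜ) = μ B * μ (⋂ j ∈ S, (A j)ᶜ) := by
  classical
  have hsub : ⋂ j ∈ S.subtype p, (A j.1)ᶜ = ⋂ j ∈ S, (A j)ᶜ := by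
    ext ω
    simp only [Set.mem_iInter, mem_subtype]
    exact ⟨fun h j hj => h ⟨j, hS j hj⟩ hj, fun h j _ => h j.1 ‹_›⟩
  have h' := h (S.subtype p) fun _ => false
  simp only [Bool.false_eq_true, if_false] at h'
  rwa [hsub] at h'

section LocalLemma

variable {Ω ι : Type*} [MeasurableSpace Ω] {μ : Measure Ω} [IsFiniteMeasure μ] [DecidableEq ι]
  {A : ι → Set Ω} {x : ι → ℝ}

lemma measureReal_biInter_compl_insert {j : ι} (hA : MeasurableSet (A j)) (T : Finset ι) :
    μ.real (⋂ k ∈ insert j T, (A k)ᶜ)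
      = μ.real (⋂ k ∈ T, (A k)ᶜ) - μ.real (A j ∩ ⋂ k ∈ T, (A k)ᶜ) := by
  rw [set_biInter_insert, Set.inter_comm, Set.inter_comm (A j),
    ← measureReal_sdiff_add_inter (s := ⋂ k ∈ T, (A k)ᶜ) hA, Set.sdiff_eq]
  ring

lemma prod_one_sub_mul_measureReal_le (hA : ∀ i, MeasurableSet (A i)) (hx1 : ∀ i, x i ≤ 1)
    {R T : Finset ι} (hRT : Disjoint R T)
    (hcond : ∀ j ∈ T, ∀ U ⊆ R ∪ T, j ∉ U →
      μ.real (A j ∩ ⋂ k ∈ U, (A k)ᶜ) ≤ x j * μ.real (⋂ k ∈ U, (A k)ᶜ)) :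
    (∏ j ∈ T, (1 - x j)) * μ.real (⋂ k ∈ R, (A k)ᶜ) ≤ μ.real (⋂ k ∈ R ∪ T, (A k)ᶜ) := by
  induction T using Finset.induction_on with
  | empty => simp
  | insert j T hjT ih =>
    have hRT' : R ∪ T ⊆ R ∪ insert j T := union_subset_union_right (subset_insert j T)
    have hjR : j ∉ R := disjoint_right.1 hRT (mem_insert_self j T)
    have hT := ih (hRT.mono_right (subset_insert j T))
      fun k hk U hU => hcond k (mem_insert_of_mem hk) U (hU.trans hRT')
    have hj := hcond j (mem_insert_self j T) (R ∪ T) hRT' (by simp [hjR, hjT])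
    have hxj : 0 ≤ 1 - x j := sub_nonneg.2 (hx1 j)
    rw [prod_insert hjT, union_insert, measureReal_biInter_compl_insert (hA j), mul_assoc]
    nlinarith [mul_le_mul_of_nonneg_left hT hxj]

lemma measureReal_inter_biInter_compl_le (hA : ∀ i, MeasurableSet (A i))
    (D : ι → Finset ι)
    (hdep : ∀ i, MutuallyIndepOf μ (A i) fun j : {j // j ∉ D i ∧ j ≠ i} => A j.1)
    (hx0 : ∀ i, 0 ≤ x i) (hx1 : ∀ i, x i ≤ 1)
    (hineq : ∀ i, μ.real (A i) ≤ x i * ∏ j ∈ D i, (1 - x j)) (S : Finset ι) {i : ι}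
    (hi : i ∉ S) :
    μ.real (A i ∩ ⋂ j ∈ S, (A j)ᶜ) ≤ x i * μ.real (⋂ j ∈ S, (A j)ᶜ) := by
  induction S using Finset.strongInduction generalizing i with
  | H S ih =>
  set R := S \ D i
  set T := S ∩ D i
  have hRT : R ∪ T = S := sdiff_union_inter S (D i)
  have hindep := (hdep i).measure_inter_biInter_compl (S := R) fun j hj =>
    ⟨(mem_sdiff.1 hj).2, fun hji => hi (hji ▸ (mem_sdiff.1 hj).1)⟩
  have hchain := prod_one_sub_mul_measureReal_le (μ := μ) hA hx1 (disjoint_sdiff_inter S (D i))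
    fun j hj U hU hjU => ih U ((ssubset_iff_of_subset (hRT ▸ hU)).2
      ⟨j, hRT ▸ mem_union_right R hj, hjU⟩) hjU
  have hprod : ∏ j ∈ D i, (1 - x j) ≤ ∏ j ∈ T, (1 - x j) :=
    prod_le_prod_of_subset_of_le_one inter_subset_right (fun j _ => sub_nonneg.2 (hx1 j))
      fun j _ _ => sub_le_self 1 (hx0 j)
  calc μ.real (A i ∩ ⋂ j ∈ S, (A j)ᶜ)
      ≤ μ.real (A i ∩ ⋂ j ∈ R, (A j)ᶜ) :=
        measureReal_mono (Set.inter_subset_inter_right _ (Set.biInter_subset_biInter_left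
          fun j hj => (mem_sdiff.1 hj).1))
    _ = μ.real (A i) * μ.real (⋂ j ∈ R, (A j)ᶜ) := by
        simp only [Measure.real, hindep, ENNReal.toReal_mul]
    _ ≤ x i * (∏ j ∈ T, (1 - x j)) * μ.real (⋂ j ∈ R, (A j)ᶜ) := by
        gcongr
        exact (hineq i).trans (mul_le_mul_of_nonneg_left hprod (hx0 i))
    _ ≤ x i * μ.real (⋂ j ∈ S, (A j)ᶜ) := by
        rw [mul_assoc, ← hRT]
        exact mul_le_mul_of_nonneg_left hchain (hx0 i)

end LocalLemma

/-- Nonsymmetric Lovász Local Lemma: if A₁,…,Aₙ are events with dependency digraph D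
(given by out-neighborhoods `D i`), and x₁,…,xₙ ∈ [0,1) satisfy
Pr[Aᵢ] ≤ xᵢ ∏_{j ∈ D i} (1-xⱼ) for all i, then Pr[⋂ᵢ ¬Aᵢ] > 0. -/
theorem stmt8 {Ω : Type*} [MeasurableSpace Ω] (μ : Measure Ω) [IsProbabilityMeasure μ]
    (n : ℕ) (A : Fin n → Set Ω) (hA : ∀ i, MeasurableSet (A i))
    (D : Fin n → Finset (Fin n))
    (hdep : ∀ i, MutuallyIndepOf μ (A i)
      (fun j : {j : Fin n // j ∉ D i ∧ j ≠ i} => A j.1))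
    (x : Fin n → ℝ) (hx0 : ∀ i, 0 ≤ x i) (hx1 : ∀ i, x i < 1)
    (hineq : ∀ i, (μ (A i)).toReal ≤ x i * ∏ j ∈ D i, (1 - x j)) :
    0 < μ (⋂ i, (A i)ᶜ) := by
  have hx1' i : x i ≤ 1 := (hx1 i).le
  have hchain := prod_one_sub_mul_measureReal_le (μ := μ) (R := ∅) (T := univ) hA hx1'
    (disjoint_empty_left _) fun _ _ U _ hjU =>
      measureReal_inter_biInter_compl_le hA D hdep hx0 hx1' hineq U hjU
  have hprod : 0 < ∏ i, (1 - x i) := prod_pos fun i _ => sub_pos.2 (hx1 i)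
  simp only [empty_union, notMem_empty, Set.iInter_of_empty, Set.iInter_univ, probReal_univ,
    mul_one, mem_univ, Set.iInter_true] at hchain
  exact (ENNReal.toReal_pos_iff.1 (hprod.trans_le hchain)).1
end

section
/- Symmetric Lovász Local Lemma: if every event A_i has Pr[A_i] ≤ p, the dependency digraph has maximum outdegree at most d ≥ 1, and ep(d+1) ≤ 1, then with positive probability none of the events A_i holds. -/
open MeasureTheory Finset

/-- Symmetric Lovász Local Lemma: if every event Aᵢ has Pr[Aᵢ] ≤ p, the dependency
digraph has maximum outdegree at most d ≥ 1, and ep(d+1) ≤ 1, then with positive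
probability none of the events Aᵢ holds. -/
theorem stmt9 {Ω : Type*} [MeasurableSpace Ω] (μ : Measure Ω) [IsProbabilityMeasure μ]
    (n : ℕ) (A : Fin n → Set Ω) (hA : ∀ i, MeasurableSet (A i))
    (D : Fin n → Finset (Fin n))
    (hdep : ∀ i, MutuallyIndepOf μ (A i)
      (fun j : {j : Fin n // j ∉ D i ∧ j ≠ i} => A j.1))
    (d : ℕ) (hd : 1 ≤ d) (hD : ∀ i, (D i).card ≤ d)
    (p : ℝ) (hp : ∀ i, (μ (A i)).toReal ≤ p)
    (hepd : Real.exp 1 * p * (d + 1) ≤ 1) :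
    0 < μ (⋂ i, (A i)ᶜ) := by
  classical
  set x : ℝ := 1/((d:ℝ)+1) with hxdef
  have hdR : (1:ℝ) ≤ d := by exact_mod_cast hd
  have hd0 : (0:ℝ) < d := by linarith
  have hd1 : (0:ℝ) < (d:ℝ)+1 := by linarith
  have hx0 : 0 < x := by rw [hxdef]; positivity
  have hx1 : x < 1 := by rw [hxdef, div_lt_one hd1]; linarith
  have h1x0 : (0:ℝ) ≤ 1 - x := by linarith
  have h1x1 : 1 - x ≤ 1 := by linarith
  -- numeric key inequality : p ≤ x (1-x)^d
  have hkey : p ≤ x * (1-x)^d := by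
    have hE : (0:ℝ) < Real.exp 1 := Real.exp_pos 1
    have h1 : ((d:ℝ)+1)/d ≤ Real.exp (1/d) := by
      have h := Real.add_one_le_exp (1/(d:ℝ))
      have heq : ((d:ℝ)+1)/d = 1/(d:ℝ)+1 := by field_simp; ring
      linarith
    have h2 : (((d:ℝ)+1)/d)^d ≤ Real.exp 1 := by
      calc (((d:ℝ)+1)/d)^d ≤ (Real.exp (1/d))^d := pow_le_pow_left₀ (by positivity) h1 d
        _ = Real.exp 1 := by
            rw [← Real.exp_nat_mul]
            congr 1
            field_simp
    have hpos : (0:ℝ) < (((d:ℝ)+1)/d)^d := by positivity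
    have h3 : (Real.exp 1)⁻¹ ≤ (((d:ℝ)+1)/d)⁻¹^d := by
      rw [inv_pow]
      exact inv_anti₀ hpos h2
    have heq2 : 1 - x = (((d:ℝ)+1)/d)⁻¹ := by
      rw [hxdef, inv_div]
      field_simp; ring
    have hp1 : p ≤ 1/(Real.exp 1 * ((d:ℝ)+1)) := by
      rw [le_div_iff₀ (by positivity)]
      nlinarith [hepd]
    calc p ≤ 1/(Real.exp 1 * ((d:ℝ)+1)) := hp1
      _ = x * (Real.exp 1)⁻¹ := by rw [hxdef]; field_simp
      _ ≤ x * (1-x)^d := by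
          rw [heq2]
          exact mul_le_mul_of_nonneg_left h3 (le_of_lt hx0)
  -- setup
  set N : Finset (Fin n) → Set Ω := fun S => ⋂ j ∈ S, (A j)ᶜ with hNdef
  set f : Finset (Fin n) → ℝ := fun S => (μ (N S)).toReal with hfdef
  have hfin : ∀ s : Set Ω, μ s ≠ ⊤ := fun s => measure_ne_top μ s
  have hf0 : ∀ S, 0 ≤ f S := fun S => ENNReal.toReal_nonneg
  have hmono : ∀ {S T : Finset (Fin n)}, S ⊆ T → N T ⊆ N S := by
    intro S T hST ω hω
    simp only [hNdef, Set.mem_iInter] at *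
    exact fun j hj => hω j (hST hj)
  have hstep : ∀ (S : Finset (Fin n)) (j : Fin n), j ∉ S →
      f (insert j S) = f S - (μ (A j ∩ N S)).toReal := by
    intro S j hj
    have h1 : N (insert j S) = N S \ A j := by
      simp only [hNdef]
      rw [Finset.set_biInter_insert, Set.inter_comm, Set.diff_eq]
    have h2 := measure_inter_add_diff (μ := μ) (N S) (hA j)
    have h3 : (μ (N S ∩ A j)).toReal + (μ (N S \ A j)).toReal = f S := by
      rw [← ENNReal.toReal_add (hfin _) (hfin _), h2]
    simp only [hfdef]
    rw [h1, Set.inter_comm (A j)]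
    linarith
  -- main induction
  have main : ∀ k (S : Finset (Fin n)), S.card ≤ k →
      0 < f S ∧ ∀ i ∉ S, (μ (A i ∩ N S)).toReal ≤ x * f S := by
    intro k
    induction k with
    | zero =>
      intro S hS
      have hSe : S = ∅ := Finset.card_eq_zero.mp (Nat.le_zero.mp hS)
      subst hSe
      have hNe : N ∅ = Set.univ := by simp [hNdef]
      have hfu : f ∅ = 1 := by simp [hfdef, hNe]
      constructor
      · rw [hfu]; norm_num
      · intro i _
        rw [hfu, hNe, Set.inter_univ, mul_one]
        have h1 : (1-x)^d ≤ 1 := pow_le_one₀ h1x0 h1x1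
        nlinarith [hp i, hkey, hx0]
    | succ k ih =>
      intro S hS
      by_cases hScard : S.card ≤ k
      · exact ih S hScard
      have hcardS : S.card = k + 1 := by omega
      have hSne : S.Nonempty := Finset.card_pos.mp (by omega)
      constructor
      · obtain ⟨j, hj⟩ := hSne
        have hjerase : j ∉ S.erase j := Finset.notMem_erase j S
        have hins : insert j (S.erase j) = S := Finset.insert_erase hj
        have hcard : (S.erase j).card ≤ k := by
          have := Finset.card_erase_of_mem hj; omega
        obtain ⟨hpos', hbd'⟩ := ih _ hcard
        have hst := hstep (S.erase j) j hjerase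
        rw [hins] at hst
        have hb := hbd' j hjerase
        nlinarith [hpos', hb]
      · intro i hi
        set S₁ := S ∩ D i with hS₁
        set S₂ := S \ D i with hS₂
        have hunion : S₂ ∪ S₁ = S := by
          rw [hS₁, hS₂]; exact Finset.sdiff_union_inter S (D i)
        have hpeel : ∀ T ⊆ S₁, (1-x)^T.card * f S₂ ≤ f (S₂ ∪ T) := by
          intro T
          induction T using Finset.induction_on with
          | empty => intro _; simp
          | @insert a T ha ihT =>
            intro haT
            have hTsub : T ⊆ S₁ := fun b hb => haT (Finset.mem_insert_of_mem hb)
            have haS₁ : a ∈ S₁ := haT (Finset.mem_insert_self a T)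
            have haD : a ∈ D i := (Finset.mem_inter.mp haS₁).2
            have haS : a ∈ S := (Finset.mem_inter.mp haS₁).1
            have haS₂ : a ∉ S₂ := by
              rw [hS₂, Finset.mem_sdiff]; exact fun h => h.2 haD
            have haUT : a ∉ S₂ ∪ T := by
              rw [Finset.mem_union]; exact fun h => h.elim haS₂ ha
            have hUsub : S₂ ∪ T ⊆ S.erase a := by
              intro b hb
              rw [Finset.mem_erase]
              rcases Finset.mem_union.mp hb with h | h
              · refine ⟨fun hba => haS₂ (hba ▸ h), (Finset.sdiff_subset) h⟩
              · exact ⟨fun hba => ha (hba ▸ h), (Finset.inter_subset_left) (hTsub h)⟩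
            have hcard : (S₂ ∪ T).card ≤ k := by
              have h1 := Finset.card_le_card hUsub
              have h2 := Finset.card_erase_of_mem haS
              omega
            obtain ⟨hpos', hbd'⟩ := ih _ hcard
            have hb := hbd' a haUT
            have hst := hstep (S₂ ∪ T) a haUT
            have heqU : S₂ ∪ insert a T = insert a (S₂ ∪ T) :=
              Finset.union_insert a S₂ T
            have hih := ihT hTsub
            rw [heqU, hst, Finset.card_insert_of_notMem ha, pow_succ]
            nlinarith [hf0 S₂, pow_nonneg h1x0 T.card]
        have hpeelS : (1-x)^S₁.card * f S₂ ≤ f S := by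
          have h := hpeel S₁ (Finset.Subset.refl _)
          rwa [hunion] at h
        have hcard₁ : S₁.card ≤ d :=
          le_trans (Finset.card_le_card Finset.inter_subset_right) (hD i)
        have hpow : (1-x)^d ≤ (1-x)^S₁.card := pow_le_pow_of_le_one h1x0 h1x1 hcard₁
        have hiS₂ : ∀ j ∈ S₂, j ∉ D i ∧ j ≠ i := by
          intro j hj
          rw [hS₂, Finset.mem_sdiff] at hj
          exact ⟨hj.2, fun h => hi (h ▸ hj.1)⟩
        have hindep : (μ (A i ∩ N S₂)).toReal = (μ (A i)).toReal * f S₂ := by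
          have h := hdep i (S₂.subtype (fun j => j ∉ D i ∧ j ≠ i)) (fun _ => false)
          simp only [Bool.false_eq_true, if_false] at h
          have hEq : (⋂ j ∈ S₂.subtype (fun j => j ∉ D i ∧ j ≠ i), (A j.1)ᶜ) = N S₂ := by
            ext ω
            simp only [hNdef, Set.mem_iInter, Finset.mem_subtype]
            constructor
            · intro hω j hj; exact hω ⟨j, hiS₂ j hj⟩ hj
            · intro hω j hj; exact hω j.1 hj
          rw [hEq] at h
          simp only [hfdef]
          rw [h, ENNReal.toReal_mul]
        have hmono2 : (μ (A i ∩ N S)).toReal ≤ (μ (A i ∩ N S₂)).toReal := by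
          apply ENNReal.toReal_mono (hfin _)
          exact measure_mono (Set.inter_subset_inter_right _ (hmono Finset.sdiff_subset))
        have h0 : 0 ≤ f S₂ := hf0 _
        calc (μ (A i ∩ N S)).toReal ≤ (μ (A i)).toReal * f S₂ := by
              rw [← hindep]; exact hmono2
          _ ≤ p * f S₂ := mul_le_mul_of_nonneg_right (hp i) h0
          _ ≤ (x * (1-x)^d) * f S₂ := mul_le_mul_of_nonneg_right hkey h0
          _ ≤ (x * (1-x)^S₁.card) * f S₂ := by
              have hh := mul_le_mul_of_nonneg_left
                (mul_le_mul_of_nonneg_right hpow h0) (le_of_lt hx0)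
              nlinarith [hh]
          _ = x * ((1-x)^S₁.card * f S₂) := by ring
          _ ≤ x * f S := mul_le_mul_of_nonneg_left hpeelS (le_of_lt hx0)
  -- conclude
  have hfinal := (main (Finset.univ.card) Finset.univ le_rfl).1
  have hNuniv : N Finset.univ = ⋂ i, (A i)ᶜ := by
    simp [hNdef]
  rw [pos_iff_ne_zero]
  intro h
  rw [hfdef] at hfinal
  simp only [hNuniv, h, ENNReal.toReal_zero] at hfinal
  exact lt_irrefl 0 hfinal
end

section
/- Suppose a partial coloring of a k-uniform hypergraph satisfies: (i) every edge has at most s missing colors, and (ii) for every vertex v there do not exist z distinct edges f_1,…,f_z containing v and z distinct colors c_1,…,c_z with c_i missing from f_i for every i. Then for every vertex v, the union S(v) = ⋃_{f ∋ v} M(f) of missing-color sets over edges containing v has |S(v)| ≤ s(z-1). -/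
/-!
Greedily build a rainbow matching `P` through `v`: a set of pairs (edge, missing colour) with
distinct edges and distinct colours. Going through the edges one by one, an edge `f` is matched
to a new colour of `M f` unless all of `M f` is already covered by the missing-colour sets of
matched edges. Hence every colour of `S(v)` lies in `M f` for a matched edge `f`, so
`|S(v)| ≤ s |P|`, while hypothesis (ii) says exactly that `|P| ≤ z - 1`.
-/

open Finset

namespace Finset

variable {α β : Type*}

def IsRainbowMatching (T : Finset α) (M : α → Finset β) (P : Finset (α × β)) : Prop :=
  (∀ p ∈ P, p.1 ∈ T ∧ p.2 ∈ M p.1) ∧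
    Set.InjOn Prod.fst (P : Set (α × β)) ∧ Set.InjOn Prod.snd (P : Set (α × β))

namespace IsRainbowMatching

variable {T T' : Finset α} {M : α → Finset β} {P : Finset (α × β)}

theorem empty (T : Finset α) (M : α → Finset β) : IsRainbowMatching T M ∅ := by
  simp [IsRainbowMatching]

theorem mono (hP : IsRainbowMatching T M P) (hT : T ⊆ T') : IsRainbowMatching T' M P :=
  ⟨fun p hp => ⟨hT (hP.1 p hp).1, (hP.1 p hp).2⟩, hP.2⟩

theorem insert [DecidableEq α] [DecidableEq β] {a : α} {c : β} (hP : IsRainbowMatching T M P)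
    (ha : a ∉ T) (hca : c ∈ M a) (hcP : c ∉ P.biUnion fun p => M p.1) :
    IsRainbowMatching (insert a T) M (insert (a, c) P) := by
  obtain ⟨hmem, hfst, hsnd⟩ := hP
  have hnew : (a, c) ∉ P := fun h => ha (hmem _ h).1
  refine ⟨?_, ?_, ?_⟩
  · rintro p hp
    rcases mem_insert.mp hp with rfl | hp
    · exact ⟨mem_insert_self _ _, hca⟩
    · exact ⟨mem_insert_of_mem (hmem p hp).1, (hmem p hp).2⟩
  · rw [coe_insert, Set.injOn_insert (by exact_mod_cast hnew)]
    refine ⟨hfst, ?_⟩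
    rintro ⟨p, hp, hpa⟩
    exact ha (hpa ▸ (hmem p hp).1 :)
  · rw [coe_insert, Set.injOn_insert (by exact_mod_cast hnew)]
    refine ⟨hsnd, ?_⟩
    rintro ⟨p, hp, hpc⟩
    exact hcP (mem_biUnion.mpr ⟨p, hp, (hpc ▸ (hmem p hp).2 :)⟩)

theorem exists_fin {z : ℕ} (hP : IsRainbowMatching T M P) (hz : z ≤ #P) :
    ∃ (f : Fin z → α) (c : Fin z → β), Function.Injective f ∧ Function.Injective c ∧
      ∀ i, f i ∈ T ∧ c i ∈ M (f i) := by
  obtain ⟨hmem, hfst, hsnd⟩ := hP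
  let e : Fin z ↪ P := (Fin.castLEEmb hz).trans P.equivFin.symm.toEmbedding
  refine ⟨fun i => (e i).1.1, fun i => (e i).1.2, ?_, ?_, fun i => hmem _ (e i).2⟩
  · exact fun i j hij => e.injective (Subtype.ext (hfst (e i).2 (e j).2 hij))
  · exact fun i j hij => e.injective (Subtype.ext (hsnd (e i).2 (e j).2 hij))

end IsRainbowMatching

theorem exists_isRainbowMatching_biUnion_subset [DecidableEq α] [DecidableEq β]
    (T : Finset α) (M : α → Finset β) :
    ∃ P, IsRainbowMatching T M P ∧ T.biUnion M ⊆ P.biUnion fun p => M p.1 := by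
  induction T using Finset.induction_on with
  | empty => exact ⟨∅, .empty _ _, by simp⟩
  | insert a T ha ih =>
    obtain ⟨P, hP, hcover⟩ := ih
    by_cases hMa : M a ⊆ P.biUnion fun p => M p.1
    · refine ⟨P, hP.mono (subset_insert a T), ?_⟩
      rw [biUnion_insert]
      exact union_subset hMa hcover
    · obtain ⟨c, hca, hcP⟩ := not_subset.mp hMa
      refine ⟨_, hP.insert ha hca hcP, ?_⟩
      rw [biUnion_insert, biUnion_insert]
      exact union_subset_union_right hcover

theorem card_biUnion_le_mul_of_isRainbowMatching [DecidableEq α] [DecidableEq β]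
    {T : Finset α} {M : α → Finset β} {s m : ℕ}
    (hM : ∀ f ∈ T, #(M f) ≤ s) (hm : ∀ P, IsRainbowMatching T M P → #P ≤ m) :
    #(T.biUnion M) ≤ s * m := by
  obtain ⟨P, hP, hcover⟩ := exists_isRainbowMatching_biUnion_subset T M
  calc #(T.biUnion M) ≤ #(P.biUnion fun p => M p.1) := card_le_card hcover
    _ ≤ ∑ p ∈ P, #(M p.1) := card_biUnion_le
    _ ≤ #P • s := sum_le_card_nsmul P _ s fun p hp => hM _ (hP.1 p hp).1
    _ ≤ s * m := by rw [smul_eq_mul, mul_comm]; exact Nat.mul_le_mul_left s (hm P hP)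

end Finset

theorem stmt11_general {V : Type*} [DecidableEq V] (t s z : ℕ)
    (H : Finset (Finset V)) (M : Finset V → Finset (Fin t))
    (hM : ∀ f ∈ H, (M f).card ≤ s)
    (hnorainbow : ∀ v : V, ¬ ∃ (f : Fin z → Finset V) (c : Fin z → Fin t),
      Function.Injective f ∧ Function.Injective c ∧
      ∀ i, f i ∈ H ∧ v ∈ f i ∧ c i ∈ M (f i)) :
    ∀ v : V, ((H.filter (fun f => v ∈ f)).biUnion M).card ≤ s * (z - 1) := by
  intro v
  refine card_biUnion_le_mul_of_isRainbowMatching (fun f hf => hM f (mem_filter.mp hf).1) ?_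
  intro P hP
  by_contra! hPz
  obtain ⟨f, c, hf, hc, hfc⟩ := hP.exists_fin (z := z) (by omega)
  exact hnorainbow v ⟨f, c, hf, hc, fun i => by simpa [and_assoc] using hfc i⟩

/-- If (i) every edge has at most s missing colors and (ii) there is no 'rainbow system'
of z distinct edges through v each missing a distinct color, then the union of the
missing-color sets over edges containing v has size at most s(z-1). -/
theorem stmt11 {V : Type*} [Fintype V] [DecidableEq V] (t s z : ℕ) (hz : 1 ≤ z)
    (H : Finset (Finset V)) (M : Finset V → Finset (Fin t))
    (hM : ∀ f ∈ H, (M f).card ≤ s)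
    (hnorainbow : ∀ v : V, ¬ ∃ (f : Fin z → Finset V) (c : Fin z → Fin t),
      Function.Injective f ∧ Function.Injective c ∧
      ∀ i, f i ∈ H ∧ v ∈ f i ∧ c i ∈ M (f i)) :
    ∀ v : V, ((H.filter (fun f => v ∈ f)).biUnion M).card ≤ s * (z - 1) :=
  stmt11_general t s z H M hM hnorainbow
end

section
/- For every real a ≥ 1 and every ε > 0 there exists k_0 such that for all k ≥ k_0 there is a k-uniform hypergraph H with maximum degree at most k^a and no strong coloring with more than (1+ε)·k/(a ln k) parts; i.e., c(H) ≤ (1+o_k(1))·k/(a ln k). -/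
open Finset Real

/-- `P` is a strong `r`-coloring of the hypergraph `H`. -/
def IsStrongColoring {V : Type} [Fintype V] [DecidableEq V]
    (H : Finset (Finset V)) (r : ℕ) (P : Fin r → Finset V) : Prop :=
  (∀ i j, i ≠ j → Disjoint (P i) (P j)) ∧
  (Finset.univ.biUnion P = (Finset.univ : Finset V)) ∧
  (∀ e ∈ H, ∀ i, (e ∩ P i).Nonempty)

open Filter


lemma mul_choose_pred (M k : ℕ) : M * Nat.choose (M-1) k = (M - k) * Nat.choose M k := by
  cases M with
  | zero => cases k <;> simp
  | succ m =>
    cases k with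
    | zero => simp
    | succ j =>
      have h1 : (m+1) * Nat.choose m j = Nat.choose (m+1) (j+1) * (j+1) :=
        Nat.add_one_mul_choose_eq m j
      have hp : Nat.choose (m+1) (j+1) = Nat.choose m j + Nat.choose m (j+1) :=
        Nat.choose_succ_succ m j
      simp only [Nat.succ_eq_add_one, Nat.add_sub_cancel]
      have : (m + 1 - (j+1)) * Nat.choose (m+1) (j+1)
          = (m+1) * Nat.choose (m+1) (j+1) - (j+1) * Nat.choose (m+1) (j+1) := by
        rw [Nat.sub_mul]
      rw [this, mul_comm (Nat.choose (m+1) (j+1)) (j+1)] at *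
      rw [← h1, hp, Nat.mul_add, Nat.add_sub_cancel_left]

lemma choose_ratio (n k T : ℕ) (h : T + k ≤ n) :
    (Nat.choose n k : ℝ) * (1 - (k:ℝ)/((n:ℝ) - T + 1))^T ≤ Nat.choose (n-T) k := by
  set y : ℝ := (k:ℝ)/((n:ℝ) - T + 1) with hy
  have hTn : (T:ℝ) ≤ n := by exact_mod_cast le_trans (Nat.le_add_right T k) h
  have hden : 0 < (n:ℝ) - T + 1 := by linarith
  have hy0 : 0 ≤ y := div_nonneg (Nat.cast_nonneg k) hden.le
  have hy1 : y ≤ 1 := by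
    rw [div_le_one hden]
    have : (T:ℝ) + k ≤ n := by exact_mod_cast h
    linarith
  have key : ∀ t, t ≤ T →
      (Nat.choose n k : ℝ) * (1 - y)^t ≤ Nat.choose (n-t) k := by
    intro t ht
    induction t with
    | zero => simp
    | succ s ih =>
      have hs : s ≤ T := le_trans (Nat.le_succ s) ht
      have ihs := ih hs
      have hksn : k ≤ n - s := by omega
      have hs1T : s + 1 ≤ T := ht
      have hMpos : (0:ℝ) < ((n - s : ℕ):ℝ) := by
        have h1 : 1 ≤ n - s := by omega
        exact_mod_cast h1
      have hcast : ((n-s:ℕ):ℝ) = (n:ℝ) - s := by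
        have : s ≤ n := by omega
        push_cast [Nat.cast_sub this]; ring
      -- identity: C(n-(s+1),k) = C(n-s,k) * ((n-s)-k)/(n-s)
      have hid := mul_choose_pred (n - s) k
      have hpred : n - s - 1 = n - (s+1) := by omega
      rw [hpred] at hid
      have hidR : ((n-s:ℕ):ℝ) * (Nat.choose (n-(s+1)) k : ℝ)
          = (((n-s:ℕ):ℝ) - k) * Nat.choose (n-s) k := by
        have hc : ((n - s - k : ℕ):ℝ) = ((n-s:ℕ):ℝ) - k := by
          push_cast [Nat.cast_sub hksn]; ring
        calc ((n-s:ℕ):ℝ) * (Nat.choose (n-(s+1)) k : ℝ)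
            = (((n-s) * Nat.choose (n-(s+1)) k : ℕ) : ℝ) := by push_cast; ring
          _ = (((n - s - k) * Nat.choose (n-s) k : ℕ) : ℝ) := by rw [hid]
          _ = (((n-s:ℕ):ℝ) - k) * Nat.choose (n-s) k := by rw [← hc]; push_cast; ring
      have hcomp : 1 - y ≤ 1 - (k:ℝ)/((n-s:ℕ):ℝ) := by
        have h2 : (n:ℝ) - T + 1 ≤ ((n-s:ℕ):ℝ) := by
          rw [hcast]
          have : (s:ℝ) + 1 ≤ (T:ℝ) := by exact_mod_cast hs1T
          linarith
        have h3 : (k:ℝ)/((n-s:ℕ):ℝ) ≤ y :=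
          div_le_div_of_nonneg_left (Nat.cast_nonneg k) hden h2
        linarith
      calc (Nat.choose n k : ℝ) * (1 - y)^(s+1)
          = ((Nat.choose n k : ℝ) * (1 - y)^s) * (1 - y) := by ring
        _ ≤ (Nat.choose (n-s) k : ℝ) * (1 - y) := by
            apply mul_le_mul_of_nonneg_right ihs (by linarith)
        _ ≤ (Nat.choose (n-s) k : ℝ) * (1 - (k:ℝ)/((n-s:ℕ):ℝ)) := by
            apply mul_le_mul_of_nonneg_left hcomp (Nat.cast_nonneg _)
        _ = (Nat.choose (n-(s+1)) k : ℝ) := by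
            field_simp
            nlinarith [hidR]
      
  exact key T le_rfl


lemma exists_hypergraph (n k T m : ℕ)
    (hcount : Nat.choose n T * (Nat.choose n k - Nat.choose (n-T) k)^m
      < Nat.choose n k ^ m) :
    ∃ H : Finset (Finset (Fin n)), (∀ e ∈ H, e.card = k) ∧ H.card ≤ m ∧
      ∀ S : Finset (Fin n), S.card = T → ∃ e ∈ H, Disjoint e S := by
  classical
  set Edges : Finset (Finset (Fin n)) := Finset.powersetCard k Finset.univ with hE
  have hEcard : Edges.card = Nat.choose n k := by
    simp [hE, Finset.card_powersetCard]
  set Ω := Fintype.piFinset (fun _ : Fin m => Edges) with hΩ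
  have hΩcard : Ω.card = Nat.choose n k ^ m := by
    simp [hΩ, Fintype.card_piFinset, hEcard]
  set Bad := Ω.filter (fun g => ∃ S ∈ Finset.powersetCard T (Finset.univ : Finset (Fin n)),
    ∀ i, ¬ Disjoint (g i) S) with hBad
  have hsub : Bad ⊆ (Finset.powersetCard T (Finset.univ : Finset (Fin n))).biUnion
      (fun S => Fintype.piFinset (fun _ : Fin m => Edges.filter (fun e => ¬ Disjoint e S))) := by
    intro g hg
    rw [hBad, Finset.mem_filter] at hg
    obtain ⟨hgΩ, S, hS, hSall⟩ := hg
    refine Finset.mem_biUnion.mpr ⟨S, hS, ?_⟩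
    rw [Fintype.mem_piFinset]
    intro i
    exact Finset.mem_filter.mpr ⟨(Fintype.mem_piFinset.mp hgΩ) i, hSall i⟩
  have hfiltercard : ∀ S : Finset (Fin n), S.card = T →
      (Edges.filter (fun e => ¬ Disjoint e S)).card
        = Nat.choose n k - Nat.choose (n-T) k := by
    intro S hS
    have hsplit := Finset.card_filter_add_card_filter_not
      (s := Edges) (p := fun e => Disjoint e S)
    have hdis : Edges.filter (fun e => Disjoint e S) = Finset.powersetCard k Sᶜ := by
      ext e
      simp only [hE, Finset.mem_filter, Finset.mem_powersetCard, Finset.subset_univ, true_and,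
        Finset.subset_compl_comm]
      constructor
      · rintro ⟨hc, hd⟩
        refine ⟨fun x hx => ?_, hc⟩
        simp only [Finset.mem_compl]
        exact fun hxe => (Finset.disjoint_left.mp hd) hxe hx
      · rintro ⟨hd, hc⟩
        refine ⟨hc, Finset.disjoint_left.mpr fun x hxe hxS => ?_⟩
        have := hd hxS
        simp only [Finset.mem_compl] at this
        exact this hxe
    have hdcard : (Edges.filter (fun e => Disjoint e S)).card = Nat.choose (n-T) k := by
      rw [hdis, Finset.card_powersetCard, Finset.card_compl, hS, Fintype.card_fin]
    omega
  have hBadcard : Bad.card < Ω.card := by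
    calc Bad.card ≤ _ := Finset.card_le_card hsub
      _ ≤ ∑ S ∈ Finset.powersetCard T (Finset.univ : Finset (Fin n)),
          (Fintype.piFinset (fun _ : Fin m => Edges.filter (fun e => ¬ Disjoint e S))).card :=
        Finset.card_biUnion_le
      _ ≤ ∑ S ∈ Finset.powersetCard T (Finset.univ : Finset (Fin n)),
          (Nat.choose n k - Nat.choose (n-T) k)^m := by
        apply Finset.sum_le_sum
        intro S hS
        rw [Fintype.card_piFinset]
        rw [Finset.prod_const, Finset.card_univ, Fintype.card_fin]
        have := hfiltercard S (by simpa [Finset.mem_powersetCard_univ] using hS)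
        rw [this]
      _ = Nat.choose n T * (Nat.choose n k - Nat.choose (n-T) k)^m := by
        rw [Finset.sum_const, Finset.card_powersetCard, Finset.card_univ, Fintype.card_fin,
          smul_eq_mul]
      _ < Ω.card := by rw [hΩcard]; exact hcount
  obtain ⟨g, hgΩ, hgood⟩ : ∃ g ∈ Ω, g ∉ Bad := by
    by_contra hcon
    push_neg at hcon
    have : Ω ⊆ Bad := hcon
    exact absurd (Finset.card_le_card this) (by omega)
  refine ⟨Finset.image g Finset.univ, ?_, ?_, ?_⟩
  · intro e he
    obtain ⟨i, _, rfl⟩ := Finset.mem_image.mp he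
    have := Fintype.mem_piFinset.mp hgΩ i
    simpa [hE, Finset.mem_powersetCard_univ] using this
  · calc (Finset.image g Finset.univ).card ≤ (Finset.univ : Finset (Fin m)).card :=
        Finset.card_image_le
      _ = m := by simp
  · intro S hS
    have : ¬ ∃ S ∈ Finset.powersetCard T (Finset.univ : Finset (Fin n)),
        ∀ i, ¬ Disjoint (g i) S := by
      intro hx
      exact hgood (Finset.mem_filter.mpr ⟨hgΩ, hx⟩)
    push_neg at this
    obtain ⟨i, hi⟩ := this S (Finset.mem_powersetCard_univ.mpr hS)
    exact ⟨g i, Finset.mem_image_of_mem g (Finset.mem_univ i), hi⟩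

lemma numeric_choose (n k T m : ℕ) (hTkn : T + k ≤ n) (hk : 1 ≤ k)
    (hmain : (T:ℝ) * Real.log n < (m:ℝ) * Real.exp (-((T:ℝ)*k/((n:ℝ)-T+1-k)))) :
    Nat.choose n T * (Nat.choose n k - Nat.choose (n-T) k)^m < Nat.choose n k ^ m := by
  have hkn : k ≤ n := le_trans (Nat.le_add_left k T) hTkn
  set B : ℝ := (Nat.choose n k : ℝ) with hB
  set D : ℝ := (Nat.choose (n-T) k : ℝ) with hD
  have hBpos : 0 < B := by rw [hB]; exact_mod_cast Nat.choose_pos hkn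
  have hDpos : 0 < D := by rw [hD]; exact_mod_cast Nat.choose_pos (by omega : k ≤ n - T)
  have hDBnat : Nat.choose (n-T) k ≤ Nat.choose n k :=
    Nat.choose_le_choose k (by omega)
  have hDB : D ≤ B := by rw [hB, hD]; exact_mod_cast hDBnat
  -- denominators
  have hTn : (T:ℝ) ≤ n := by exact_mod_cast le_trans (Nat.le_add_right T k) hTkn
  have hden1 : 0 < (n:ℝ) - T + 1 := by linarith
  have hden2 : 0 < (n:ℝ) - T + 1 - k := by
    have : (T:ℝ) + k ≤ n := by exact_mod_cast hTkn
    linarith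
  set y : ℝ := (k:ℝ)/((n:ℝ) - T + 1) with hy
  have hy0 : 0 ≤ y := div_nonneg (Nat.cast_nonneg k) hden1.le
  have hy1 : y < 1 := by
    rw [div_lt_one hden1]
    have : (T:ℝ) + k ≤ n := by exact_mod_cast hTkn
    linarith
  have hyratio : y / (1 - y) = (k:ℝ)/((n:ℝ) - T + 1 - k) := by
    rw [hy]
    field_simp
  -- step 1: B * exp(-T*k/(n-T+1-k)) ≤ D
  have h1y : (0:ℝ) < 1 - y := by linarith
  have hexp1 : Real.exp (-(y/(1-y))) ≤ 1 - y := by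
    have h1 : y/(1-y) + 1 ≤ Real.exp (y/(1-y)) := Real.add_one_le_exp _
    have h2 : y/(1-y) + 1 = 1/(1-y) := by field_simp; ring
    rw [Real.exp_neg]
    rw [h2] at h1
    have h3 : 0 < (1:ℝ)/(1-y) := div_pos one_pos h1y
    calc (Real.exp (y/(1-y)))⁻¹ ≤ (1/(1-y))⁻¹ := inv_anti₀ h3 h1
      _ = 1 - y := by field_simp
  have hstep1 : B * Real.exp (-((T:ℝ)*k/((n:ℝ)-T+1-k))) ≤ D := by
    have hpow : Real.exp (-((T:ℝ)*k/((n:ℝ)-T+1-k))) ≤ (1-y)^T := by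
      have : -((T:ℝ)*k/((n:ℝ)-T+1-k)) = (T:ℕ) * (-(y/(1-y))) := by
        rw [hyratio]; push_cast; ring
      rw [this, Real.exp_nat_mul]
      exact pow_le_pow_left₀ (Real.exp_nonneg _) hexp1 T
    calc B * Real.exp (-((T:ℝ)*k/((n:ℝ)-T+1-k))) ≤ B * (1-y)^T :=
          mul_le_mul_of_nonneg_left hpow hBpos.le
      _ ≤ D := choose_ratio n k T hTkn
  -- step 2: real inequality
  have hmD : (T:ℝ) * Real.log n < (m:ℝ) * (D/B) := by
    calc (T:ℝ) * Real.log n < (m:ℝ) * Real.exp (-((T:ℝ)*k/((n:ℝ)-T+1-k))) := hmain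
      _ ≤ (m:ℝ) * (D/B) := by
          apply mul_le_mul_of_nonneg_left _ (Nat.cast_nonneg m)
          rw [le_div_iff₀ hBpos]
          linarith [hstep1]
  have hn0 : (0:ℝ) < (n:ℝ) := by
    have : 0 < n := lt_of_lt_of_le hk hkn
    exact_mod_cast this
  have hnT : (Nat.choose n T : ℝ) ≤ Real.exp ((T:ℝ) * Real.log n) := by
    calc (Nat.choose n T : ℝ) ≤ ((n:ℝ))^T := by exact_mod_cast Nat.choose_le_pow n T
      _ = Real.exp ((T:ℝ) * Real.log n) := by
          rw [Real.exp_nat_mul, Real.exp_log hn0]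
  -- assemble
  have hBD0 : 0 ≤ B - D := by linarith
  have hstep2 : B - D ≤ B * Real.exp (-(D/B)) := by
    have h4 := Real.add_one_le_exp (-(D/B))
    have h5 : 1 - D/B ≤ Real.exp (-(D/B)) := by linarith
    have h6 : B * (1 - D/B) ≤ B * Real.exp (-(D/B)) :=
      mul_le_mul_of_nonneg_left h5 hBpos.le
    have h7 : B * (1 - D/B) = B - D := by field_simp
    linarith
  have hreal : (Nat.choose n T : ℝ) * (B - D)^m < B^m := by
    have h8 : (B - D)^m ≤ (B * Real.exp (-(D/B)))^m := pow_le_pow_left₀ hBD0 hstep2 m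
    have h9 : (B * Real.exp (-(D/B)))^m = B^m * Real.exp (-((m:ℝ) * (D/B))) := by
      rw [mul_pow, ← Real.exp_nat_mul]
      ring_nf
    have h10 : (Nat.choose n T : ℝ) * (B - D)^m
        ≤ Real.exp ((T:ℝ) * Real.log n) * (B^m * Real.exp (-((m:ℝ) * (D/B)))) := by
      rw [← h9]
      apply mul_le_mul hnT h8 (by positivity) (Real.exp_nonneg _)
    have h11 : Real.exp ((T:ℝ) * Real.log n) * (B^m * Real.exp (-((m:ℝ) * (D/B))))
        = B^m * Real.exp ((T:ℝ) * Real.log n - (m:ℝ) * (D/B)) := by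
      rw [sub_eq_add_neg, Real.exp_add]
      ring
    have h12 : Real.exp ((T:ℝ) * Real.log n - (m:ℝ) * (D/B)) < 1 := by
      apply Real.exp_lt_one_iff.mpr
      linarith [hmD]
    have hBm : (0:ℝ) < B^m := by positivity
    calc (Nat.choose n T : ℝ) * (B - D)^m
        ≤ B^m * Real.exp ((T:ℝ) * Real.log n - (m:ℝ) * (D/B)) := by rw [← h11]; exact h10
      _ < B^m * 1 := by exact (mul_lt_mul_iff_right₀ hBm).mpr h12
      _ = B^m := mul_one _
  have hfinal : ((Nat.choose n T * (Nat.choose n k - Nat.choose (n-T) k)^m : ℕ):ℝ)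
      < ((Nat.choose n k ^ m : ℕ):ℝ) := by
    push_cast [Nat.cast_sub hDBnat]
    exact hreal
  exact_mod_cast hfinal


lemma eventual_facts (a ε : ℝ) (ha : 1 ≤ a) (hε : 0 < ε) (c : ℕ) (hc : 1 ≤ c) :
    ∀ᶠ K : ℝ in atTop,
      ((c:ℝ)*a*Real.log K/(1+ε) + 1 ≤ K) ∧
      (8*(Real.exp 1)*(c:ℝ)*(Real.log K)^2 < K^(ε/4)) ∧
      (Real.exp 1 ≤ K^(ε/4)) := by
  have hc0 : (0:ℝ) < c := by exact_mod_cast hc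
  have ha0 : (0:ℝ) < a := by linarith
  have hε4 : (0:ℝ) < ε/4 := by linarith
  -- E2
  have h2 : ∀ᶠ K : ℝ in atTop, (c:ℝ)*a*Real.log K/(1+ε) + 1 ≤ K := by
    have hlit := Real.isLittleO_log_id_atTop.bound
      (by positivity : (0:ℝ) < (1+ε)/(2*(c:ℝ)*a))
    filter_upwards [hlit, eventually_ge_atTop (2:ℝ), eventually_ge_atTop (1:ℝ)]
      with K hK h2K h1K
    have hlog0 : 0 ≤ Real.log K := Real.log_nonneg h1K
    simp only [id_eq, Real.norm_eq_abs] at hK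
    rw [abs_of_nonneg hlog0, abs_of_nonneg (by linarith : (0:ℝ) ≤ K)] at hK
    have : (c:ℝ)*a*Real.log K/(1+ε) ≤ K/2 := by
      rw [div_le_div_iff₀ (by linarith) (by norm_num)]
      calc (c:ℝ)*a*Real.log K * 2 ≤ (c:ℝ)*a*((1+ε)/(2*(c:ℝ)*a)*K) * 2 := by
            apply mul_le_mul_of_nonneg_right _ (by norm_num)
            exact mul_le_mul_of_nonneg_left hK (by positivity)
        _ = K * (1+ε) := by field_simp
    linarith
  -- E3
  have h3 : ∀ᶠ K : ℝ in atTop, 8*(Real.exp 1)*(c:ℝ)*(Real.log K)^2 < K^(ε/4) := by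
    have hlit := (isLittleO_log_rpow_rpow_atTop (2:ℝ) hε4).bound
      (by positivity : (0:ℝ) < 1/(8*(Real.exp 1)*(c:ℝ)+1))
    filter_upwards [hlit, eventually_ge_atTop (1:ℝ)] with K hK h1K
    have hK0 : (0:ℝ) < K := by linarith
    have hlog0 : 0 ≤ Real.log K := Real.log_nonneg h1K
    have hrp : (0:ℝ) < K^(ε/4) := Real.rpow_pos_of_pos hK0 _
    rw [Real.norm_eq_abs, Real.norm_eq_abs] at hK
    rw [abs_of_nonneg (Real.rpow_nonneg hK0.le _), abs_of_nonneg
      (Real.rpow_nonneg hlog0 _)] at hK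
    have hcast : (Real.log K)^((2:ℕ):ℝ) = (Real.log K)^(2:ℕ) := Real.rpow_natCast _ 2
    push_cast at hcast
    rw [hcast] at hK
    have hfac : (0:ℝ) < 8*(Real.exp 1)*(c:ℝ) := by positivity
    calc 8*(Real.exp 1)*(c:ℝ)*(Real.log K)^2
        ≤ 8*(Real.exp 1)*(c:ℝ)*(1/(8*(Real.exp 1)*(c:ℝ)+1)*K^(ε/4)) :=
          mul_le_mul_of_nonneg_left hK hfac.le
      _ < K^(ε/4) := by
          rw [← mul_assoc]
          have : 8*(Real.exp 1)*(c:ℝ)*(1/(8*(Real.exp 1)*(c:ℝ)+1)) < 1 := by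
            rw [mul_one_div, div_lt_one (by positivity)]
            linarith
          nlinarith [hrp]
  -- E4
  have h4 : ∀ᶠ K : ℝ in atTop, Real.exp 1 ≤ K^(ε/4) :=
    (tendsto_rpow_atTop hε4).eventually_ge_atTop (Real.exp 1)
  filter_upwards [h2, h3, h4] with K hA hB hC
  exact ⟨hA, hB, hC⟩

set_option maxHeartbeats 1000000 in
theorem aux14 (a : ℝ) (ha : 1 ≤ a) (ε : ℝ) (hε : 0 < ε) (hε1 : ε ≤ 1) :
    ∃ k0 : ℕ, ∀ k : ℕ, k ≥ k0 →
      ∃ (V : Type) (_ : Fintype V) (_ : DecidableEq V) (H : Finset (Finset V)),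
        (∀ e ∈ H, e.card = k) ∧
        (∀ v : V, ((H.filter (fun e => v ∈ e)).card : ℝ) ≤ (k : ℝ) ^ a) ∧
        ∀ r : ℕ, ∀ P : Fin r → Finset V, IsStrongColoring H r P →
          (r : ℝ) ≤ (1 + ε) * k / (a * Real.log k) := by
  have ha0 : (0:ℝ) < a := by linarith
  set c : ℕ := ⌈(16:ℝ)/ε⌉₊ with hc
  have hc16 : (16:ℝ)/ε ≤ c := Nat.le_ceil _
  have hcR : (16:ℝ) ≤ (c:ℝ) := by
    have : (16:ℝ) ≤ 16/ε := by
      rw [le_div_iff₀ hε]; nlinarith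
    linarith
  have hc16n : 16 ≤ c := by exact_mod_cast hcR
  have hc1 : 1 ≤ c := by omega
  have hεc : (16:ℝ) ≤ ε * c := by
    rw [div_le_iff₀ hε] at hc16; linarith
  clear_value c
  -- eventual facts transferred to ℕ
  have hevN : ∀ᶠ k : ℕ in atTop,
      (((c:ℝ)*a*Real.log k/(1+ε) + 1 ≤ (k:ℝ)) ∧
      (8*(Real.exp 1)*(c:ℝ)*(Real.log k)^2 < (k:ℝ)^(ε/4)) ∧
      (Real.exp 1 ≤ (k:ℝ)^(ε/4))) :=
    tendsto_natCast_atTop_atTop.eventually (eventual_facts a ε ha hε c hc1)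
  have hall := (hevN.and ((eventually_ge_atTop 3).and (eventually_ge_atTop c)))
  obtain ⟨k0, hk0⟩ := eventually_atTop.mp hall
  refine ⟨k0, fun k hk => ?_⟩
  obtain ⟨⟨hE2, hE3, hE4⟩, hk3, hkc⟩ := hk0 k hk
  set K : ℝ := (k:ℝ) with hKdef
  clear_value K
  have hK3 : (3:ℝ) ≤ K := by rw [hKdef]; exact_mod_cast hk3
  have hK0 : (0:ℝ) < K := by linarith
  have hlog1 : 1 ≤ Real.log K := by
    rw [Real.le_log_iff_exp_le hK0]
    have := Real.exp_one_lt_d9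
    linarith
  have hε1' : (1:ℝ) ≤ 1 + ε := by linarith
  set x : ℝ := (c:ℝ)*a*Real.log K/(1+ε) with hxdef
  have hlogK0 : (0:ℝ) ≤ Real.log K := by linarith
  clear_value x
  have hx0 : 0 ≤ x := by rw [hxdef]; positivity
  obtain ⟨T, hTdef⟩ : ∃ T : ℕ, T = ⌈x⌉₊ := ⟨_, rfl⟩
  obtain ⟨n, hndef⟩ : ∃ n : ℕ, n = c * k := ⟨_, rfl⟩
  obtain ⟨m, hmdef⟩ : ∃ m : ℕ, m = ⌊K^a⌋₊ := ⟨_, rfl⟩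
  have hTx : x ≤ (T:ℝ) := hTdef ▸ Nat.le_ceil x
  have hTx1 : (T:ℝ) < x + 1 := hTdef ▸ Nat.ceil_lt_add_one hx0
  have hTK : (T:ℝ) ≤ K := by linarith
  have hTk : T ≤ k := by rw [hKdef] at hTK; exact_mod_cast hTK
  have hk1 : 1 ≤ k := by omega
  have hTkn : T + k ≤ n := by
    rw [hndef]
    calc T + k ≤ 2 * k := by omega
      _ ≤ c * k := Nat.mul_le_mul_right k (by omega)
  have hNcast : ((n:ℕ):ℝ) = (c:ℝ) * K := by rw [hndef, hKdef]; push_cast; ring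
  -- main numeric hypothesis
  have hxcal : x ≤ (c:ℝ)*a*Real.log K := by
    rw [hxdef]
    apply div_le_self (by positivity) hε1'
  have hca1 : (1:ℝ) ≤ (c:ℝ)*a := by nlinarith
  have hcal1 : (1:ℝ) ≤ (c:ℝ)*a*Real.log K := by nlinarith
  have hT2cal : (T:ℝ) ≤ 2*((c:ℝ)*a*Real.log K) := by nlinarith
  have hlogN : Real.log n ≤ 2 * Real.log K := by
    rw [hNcast, Real.log_mul (by positivity) (by positivity)]
    have : Real.log (c:ℝ) ≤ Real.log K := by
      apply Real.log_le_log (by positivity)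
      rw [hKdef]
      exact_mod_cast hkc
    linarith [Real.log_nonneg (show (1:ℝ) ≤ (c:ℝ) by linarith)]
  have hLHS : (T:ℝ) * Real.log n ≤ 4*(c:ℝ)*a*(Real.log K)^2 := by
    have h0 : 0 ≤ Real.log (n:ℝ) := by
      apply Real.log_nonneg
      have : 1 ≤ n := by rw [hndef]; exact Nat.one_le_iff_ne_zero.mpr (Nat.mul_ne_zero (by omega) (by omega))
      exact_mod_cast this
    calc (T:ℝ) * Real.log n ≤ (2*((c:ℝ)*a*Real.log K)) * (2 * Real.log K) := by
          apply mul_le_mul hT2cal hlogN h0 (by positivity)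
      _ = 4*(c:ℝ)*a*(Real.log K)^2 := by ring
  -- exp argument bounds
  have hd1 : (0:ℝ) < (n:ℝ) - T + 1 - k := by
    rw [hNcast]
    have h1 : ((c:ℝ)-2)*K + 1 ≤ (c:ℝ)*K - T + 1 - K := by linarith
    nlinarith [mul_pos (show (0:ℝ) < (c:ℝ)-2 by linarith) hK0]
  have hc2 : (0:ℝ) < (c:ℝ) - 2 := by linarith
  have hargA : (T:ℝ)*k/((n:ℝ) - T + 1 - k) ≤ (T:ℝ)/((c:ℝ)-2) := by
    rw [div_le_div_iff₀ hd1 hc2]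
    rw [hNcast, ← hKdef]
    have hT0 : (0:ℝ) ≤ (T:ℝ) := Nat.cast_nonneg T
    nlinarith [mul_le_mul_of_nonneg_left
      (show ((c:ℝ)-2)*K ≤ (c:ℝ)*K - T + 1 - K by linarith) hT0]
  have hargB : (T:ℝ)/((c:ℝ)-2) ≤ (1-ε/4)*a*Real.log K + 1 := by
    rw [div_le_iff₀ hc2]
    have hkey : (c:ℝ) ≤ (1-ε/4)*(1+ε)*((c:ℝ)-2) := by nlinarith
    have hx2 : x * (1+ε) = (c:ℝ)*a*Real.log K := by
      rw [hxdef]; field_simp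
    have halog : 0 ≤ a * Real.log K := by positivity
    have h5 : (c:ℝ)*a*Real.log K ≤ (1-ε/4)*(1+ε)*((c:ℝ)-2)*(a*Real.log K) := by
      calc (c:ℝ)*a*Real.log K = (c:ℝ)*(a*Real.log K) := by ring
        _ ≤ ((1-ε/4)*(1+ε)*((c:ℝ)-2))*(a*Real.log K) :=
            mul_le_mul_of_nonneg_right hkey halog
        _ = (1-ε/4)*(1+ε)*((c:ℝ)-2)*(a*Real.log K) := rfl
    have h6 : x ≤ (1-ε/4)*((c:ℝ)-2)*(a*Real.log K) := by
      rw [hxdef, div_le_iff₀ (by linarith : (0:ℝ) < 1+ε)]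
      nlinarith
    nlinarith
  have hexpmono : Real.exp (-((1-ε/4)*a*Real.log K + 1))
      ≤ Real.exp (-((T:ℝ)*k/((n:ℝ) - T + 1 - k))) := by
    apply Real.exp_le_exp.mpr
    have := le_trans hargA hargB
    linarith
  -- lower bound on m
  have hm1 : K^a < (m:ℝ) + 1 := by
    rw [hmdef]; exact_mod_cast Nat.lt_floor_add_one (K^a)
  have hKa1 : (1:ℝ) ≤ K^a := Real.one_le_rpow (by linarith) (by linarith)
  have hm0 : (1:ℝ) ≤ m := by
    rw [hmdef]
    have : 1 ≤ ⌊K^a⌋₊ := Nat.le_floor (by exact_mod_cast hKa1)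
    exact_mod_cast this
  have hm2 : K^a/2 ≤ (m:ℝ) := by linarith
  -- the rpow computation
  have hrw : Real.exp (-((1-ε/4)*a*Real.log K + 1))
      = Real.exp (-1) * K^(-((1-ε/4)*a)) := by
    rw [Real.rpow_def_of_pos hK0, ← Real.exp_add]
    ring_nf
  have hXa : a * K^(ε/4) ≤ K^((ε/4)*a) := by
    have hX : Real.exp 1 ≤ K^(ε/4) := hE4
    have hX0 : (0:ℝ) < K^(ε/4) := Real.rpow_pos_of_pos hK0 _
    rw [Real.rpow_mul hK0.le]
    have h7 : (K^(ε/4))^(a-1+1) = (K^(ε/4))^(a-1) * (K^(ε/4))^(1:ℝ) := by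
      rw [Real.rpow_add hX0]
    have h8 : Real.exp (a-1) ≤ (K^(ε/4))^(a-1) :=
      Real.exp_one_rpow (a-1) ▸ Real.rpow_le_rpow (Real.exp_pos 1).le hX (by linarith)
    have h9 : a ≤ Real.exp (a-1) := by
      have := Real.add_one_le_exp (a-1); linarith
    calc a * K^(ε/4) ≤ (K^(ε/4))^(a-1) * (K^(ε/4))^(1:ℝ) := by
          rw [Real.rpow_one]
          apply mul_le_mul_of_nonneg_right (le_trans h9 h8) hX0.le
      _ = (K^(ε/4))^(a-1+1) := h7.symm
      _ = (K^(ε/4))^a := by norm_num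
  have hRHSlow : K^((ε/4)*a) / (2*Real.exp 1) ≤ (m:ℝ) * Real.exp (-((T:ℝ)*k/((n:ℝ) - T + 1 - k))) := by
    have hsplit : K^a * K^(-((1-ε/4)*a)) = K^((ε/4)*a) := by
      rw [← Real.rpow_add hK0]; ring_nf
    calc K^((ε/4)*a) / (2*Real.exp 1)
        = (K^a/2) * (Real.exp (-1) * K^(-((1-ε/4)*a))) := by
          rw [← hsplit, Real.exp_neg]
          field_simp
      _ ≤ (m:ℝ) * (Real.exp (-1) * K^(-((1-ε/4)*a))) := by
          apply mul_le_mul_of_nonneg_right hm2 (by positivity)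
      _ = (m:ℝ) * Real.exp (-((1-ε/4)*a*Real.log K + 1)) := by rw [hrw]
      _ ≤ (m:ℝ) * Real.exp (-((T:ℝ)*k/((n:ℝ) - T + 1 - k))) := by
          apply mul_le_mul_of_nonneg_left hexpmono (by positivity)
  have hmain : (T:ℝ) * Real.log n < (m:ℝ) * Real.exp (-((T:ℝ)*k/((n:ℝ)-T+1-k))) := by
    have hG : 4*(c:ℝ)*a*(Real.log K)^2 < K^((ε/4)*a) / (2*Real.exp 1) := by
      rw [lt_div_iff₀ (by positivity)]
      have h1 : 4*(c:ℝ)*a*(Real.log K)^2 * (2*Real.exp 1)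
          = (8*(Real.exp 1)*(c:ℝ)*(Real.log K)^2) * a := by ring
      rw [h1]
      calc (8*(Real.exp 1)*(c:ℝ)*(Real.log K)^2) * a < K^(ε/4) * a :=
            mul_lt_mul_of_pos_right hE3 ha0
        _ = a * K^(ε/4) := mul_comm _ _
        _ ≤ K^((ε/4)*a) := hXa
    calc (T:ℝ) * Real.log n ≤ 4*(c:ℝ)*a*(Real.log K)^2 := hLHS
      _ < K^((ε/4)*a) / (2*Real.exp 1) := hG
      _ ≤ _ := hRHSlow
  -- get the hypergraph
  obtain ⟨H, hHcard, hHsize, hHmiss⟩ := exists_hypergraph n k T m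
    (numeric_choose n k T m hTkn hk1 hmain)
  refine ⟨Fin n, inferInstance, inferInstance, H, hHcard, ?_, ?_⟩
  · intro v
    calc ((H.filter (fun e => v ∈ e)).card : ℝ) ≤ (H.card : ℝ) := by
          exact_mod_cast Finset.card_filter_le _ _
      _ ≤ (m:ℝ) := by exact_mod_cast hHsize
      _ ≤ K^a := by rw [hmdef]; exact Nat.floor_le (by positivity)
  · rintro r P ⟨hdisj, hcover, hmeet⟩
    -- every part has size ≥ T+1
    have hpart : ∀ i : Fin r, T + 1 ≤ (P i).card := by
      intro i
      by_contra hcon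
      push_neg at hcon
      have hPiT : (P i).card ≤ T := by omega
      obtain ⟨S, hPS, hScard⟩ := Finset.exists_superset_card_eq hPiT
        (by
          rw [Fintype.card_fin, hndef]
          exact le_trans hTk (Nat.le_mul_of_pos_left k (by omega)))
      obtain ⟨e, heH, heS⟩ := hHmiss S hScard
      obtain ⟨w, hw⟩ := hmeet e heH i
      rw [Finset.mem_inter] at hw
      exact (Finset.disjoint_left.mp heS hw.1) (hPS hw.2)
    -- sum of part sizes is n
    have hsum : ∑ i : Fin r, (P i).card = n := by
      rw [← Finset.card_biUnion (fun i _ j _ hij => hdisj i j hij), hcover]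
      simp [hndef]
    have hrT : r * (T+1) ≤ n := by
      calc r * (T+1) = ∑ _i : Fin r, (T+1) := by simp [mul_comm]
        _ ≤ ∑ i : Fin r, (P i).card := Finset.sum_le_sum (fun i _ => hpart i)
        _ = n := hsum
    -- conclude
    have hrR : (r:ℝ) * ((c:ℝ)*a*Real.log K/(1+ε)) ≤ (c:ℝ)*K := by
      have h1 : (r:ℝ) * ((T:ℝ)+1) ≤ (c:ℝ)*K := by
        rw [← hNcast]
        exact_mod_cast hrT
      have h2 : x ≤ (T:ℝ)+1 := by linarith
      calc (r:ℝ) * ((c:ℝ)*a*Real.log K/(1+ε)) = (r:ℝ) * x := by rw [hxdef]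
        _ ≤ (r:ℝ) * ((T:ℝ)+1) := mul_le_mul_of_nonneg_left h2 (Nat.cast_nonneg r)
        _ ≤ (c:ℝ)*K := h1
    have hc0 : (0:ℝ) < c := by linarith
    have hthis := hrR
    rw [mul_div_assoc'] at hthis
    rw [div_le_iff₀ (by linarith : (0:ℝ) < 1+ε)] at hthis
    -- hthis : r * (c*a*log K) ≤ c*K*(1+ε)
    have h7 : (r:ℝ)*(a*Real.log K) ≤ (1+ε)*K := by
      have h6 : (c:ℝ)*((r:ℝ)*(a*Real.log K)) ≤ (c:ℝ)*((1+ε)*K) := by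
        calc (c:ℝ)*((r:ℝ)*(a*Real.log K)) = (r:ℝ)*((c:ℝ)*a*Real.log K) := by ring
          _ ≤ (c:ℝ)*K*(1+ε) := hthis
          _ = (c:ℝ)*((1+ε)*K) := by ring
      exact le_of_mul_le_mul_left h6 hc0
    rw [le_div_iff₀ (mul_pos ha0 (by linarith : (0:ℝ) < Real.log K))]
    exact h7


/-- Tightness: for every a ≥ 1 and ε > 0 there is k₀ such that for all k ≥ k₀ there is
a k-uniform hypergraph with maximum degree at most k^a admitting no strong coloring
with more than (1+ε)k/(a ln k) parts. -/
theorem stmt14 (a : ℝ) (ha : 1 ≤ a) (ε : ℝ) (hε : 0 < ε) :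
    ∃ k0 : ℕ, ∀ k : ℕ, k ≥ k0 →
      ∃ (V : Type) (_ : Fintype V) (_ : DecidableEq V) (H : Finset (Finset V)),
        (∀ e ∈ H, e.card = k) ∧
        (∀ v : V, ((H.filter (fun e => v ∈ e)).card : ℝ) ≤ (k : ℝ) ^ a) ∧
        ∀ r : ℕ, ∀ P : Fin r → Finset V, IsStrongColoring H r P →
          (r : ℝ) ≤ (1 + ε) * k / (a * Real.log k) := by
  set ε' := min ε 1 with hε'def
  have hε'0 : 0 < ε' := lt_min hε one_pos
  have hε'1 : ε' ≤ 1 := min_le_right ε 1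
  have hε'ε : ε' ≤ ε := min_le_left ε 1
  obtain ⟨k0, hk0⟩ := aux14 a ha ε' hε'0 hε'1
  refine ⟨max k0 3, fun k hk => ?_⟩
  obtain ⟨V, iF, iD, H, h1, h2, h3⟩ := hk0 k (le_trans (le_max_left _ _) hk)
  refine ⟨V, iF, iD, H, h1, h2, fun r P hP => ?_⟩
  have hr := h3 r P hP
  have hk3 : 3 ≤ k := le_trans (le_max_right _ _) hk
  have hklog : 0 < Real.log k := Real.log_pos (by exact_mod_cast (by omega : 1 < k))
  have hk0' : (0:ℝ) ≤ (k:ℝ) := Nat.cast_nonneg k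
  have hpos : 0 < a * Real.log k := mul_pos (by linarith) hklog
  have hnum : (1 + ε') * (k:ℝ) ≤ (1 + ε) * (k:ℝ) := by nlinarith
  calc (r:ℝ) ≤ (1 + ε') * k / (a * Real.log k) := hr
    _ ≤ (1 + ε) * k / (a * Real.log k) := by
        have := mul_le_mul_of_nonneg_right hnum (inv_nonneg.mpr hpos.le)
        simpa [div_eq_mul_inv] using this
end

section
/- Let n = k^{2a}, m = (1-ε)k^{3a-1}, and choose m edges independently and uniformly at random from all k-subsets of [n]. Then for a fixed vertex v, the probability that v lies in more than k^a of the chosen edges is less than 1/(2n), for k sufficiently large. -/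
open MeasureTheory Finset Real

noncomputable instance (n : ℕ) : MeasurableSpace (Finset (Fin n)) := ⊤

/-- The uniform distribution on the k-element subsets of [n]. -/
noncomputable def uniformEdge (n k : ℕ) : Measure (Finset (Fin n)) :=
  ((((Finset.univ : Finset (Fin n)).powersetCard k)).card : ENNReal)⁻¹ •
    ∑ e ∈ ((Finset.univ : Finset (Fin n)).powersetCard k), Measure.dirac e

lemma measSet_edge {n : ℕ} (s : Set (Finset (Fin n))) : MeasurableSet s :=
  MeasurableSpace.measurableSet_top

lemma measSet_all {n m : ℕ} (S : Set (Fin m → Finset (Fin n))) : MeasurableSet S := by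
  have hsing : ∀ ω : Fin m → Finset (Fin n), MeasurableSet ({ω} : Set _) := by
    intro ω
    have h : ({ω} : Set (Fin m → Finset (Fin n))) = Set.univ.pi fun i => {ω i} := by
      ext f; simp [Set.mem_pi, funext_iff]
    rw [h]
    exact MeasurableSet.univ_pi fun i => measSet_edge _
  have h : S = ⋃ ω ∈ S, ({ω} : Set _) := by simp
  rw [h]
  exact MeasurableSet.biUnion (Set.to_countable S) (fun ω _ => hsing ω)

lemma uniformEdge_singleton (n k : ℕ) (e : Finset (Fin n)) :
    uniformEdge n k {e} =
      if e ∈ (Finset.univ : Finset (Fin n)).powersetCard k then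
        (((Finset.univ : Finset (Fin n)).powersetCard k).card : ENNReal)⁻¹ else 0 := by
  rw [uniformEdge, Measure.smul_apply, Measure.finset_sum_apply]
  have : ∀ e' : Finset (Fin n), Measure.dirac e' ({e} : Set _) = if e' = e then 1 else 0 := by
    intro e'
    rw [Measure.dirac_apply' _ (measSet_edge _)]
    by_cases h : e' = e <;> simp [h]
  simp only [this, Finset.sum_ite_eq' _ e fun _ => (1:ENNReal)]
  by_cases h : e ∈ (Finset.univ : Finset (Fin n)).powersetCard k <;> simp [h]

instance uniformEdge_finite (n k : ℕ) : IsFiniteMeasure (uniformEdge n k) := by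
  constructor
  rw [uniformEdge, Measure.smul_apply, Measure.finset_sum_apply]
  simp only [measure_univ, Finset.sum_const, nsmul_eq_mul, mul_one, smul_eq_mul]
  exact lt_of_le_of_lt (ENNReal.inv_mul_le_one _) ENNReal.one_lt_top

lemma pi_measure_eq (n k m : ℕ) (S : Set (Fin m → Finset (Fin n)))
    [DecidablePred (· ∈ S)] :
    (Measure.pi fun _ : Fin m => uniformEdge n k) S
      = ∑ ω ∈ Finset.univ.filter (· ∈ S), ∏ i, uniformEdge n k {ω i} := by
  have h : S = ⋃ ω ∈ Finset.univ.filter (· ∈ S), ({ω} : Set _) := by ext; simp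
  rw [show (Measure.pi fun _ : Fin m => uniformEdge n k) S
      = (Measure.pi fun _ : Fin m => uniformEdge n k)
        (⋃ ω ∈ Finset.univ.filter (· ∈ S), ({ω} : Set _)) from by rw [← h],
    measure_biUnion_finset ?_ (fun _ _ => measSet_all _)]
  · refine Finset.sum_congr rfl fun ω _ => ?_
    have h1 : ({ω} : Set (Fin m → Finset (Fin n))) = Set.univ.pi fun i => {ω i} := by
      ext f; simp [Set.mem_pi, funext_iff]
    rw [h1, Measure.pi_pi]
  · intro x _ y _ hxy
    simp [Set.disjoint_singleton, hxy]

lemma card_edges_mem {n k : ℕ} (hk : 1 ≤ k) (v : Fin n) :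
    (((Finset.univ : Finset (Fin n)).powersetCard k).filter (fun e => v ∈ e)).card
      = (n - 1).choose (k - 1) := by
  have h1 : (((Finset.univ : Finset (Fin n)).powersetCard k).filter (fun e => v ∈ e)).card
      = ((Finset.univ.erase v).powersetCard (k - 1)).card := by
    apply Finset.card_bij' (fun e _ => e.erase v) (fun t _ => insert v t)
    · intro e he
      simp only [Finset.mem_filter, Finset.mem_powersetCard_univ] at he
      exact Finset.insert_erase he.2
    · intro t ht
      rw [Finset.mem_powersetCard] at ht
      have hv : v ∉ t := fun hvt => by
        have := ht.1 hvt
        simp at this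
      exact Finset.erase_insert hv
    · intro e he
      simp only [Finset.mem_filter, Finset.mem_powersetCard_univ] at he
      rw [Finset.mem_powersetCard]
      refine ⟨fun x hx => ?_, ?_⟩
      · rw [Finset.mem_erase] at hx ⊢
        exact ⟨hx.1, Finset.mem_univ x⟩
      · rw [Finset.card_erase_of_mem he.2, he.1]
    · intro t ht
      rw [Finset.mem_powersetCard] at ht
      have hv : v ∉ t := fun hvt => by
        have := ht.1 hvt
        simp at this
      simp only [Finset.mem_filter, Finset.mem_powersetCard_univ]
      refine ⟨?_, Finset.mem_insert_self v t⟩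
      rw [Finset.card_insert_of_notMem hv, ht.2]
      omega
  rw [h1, Finset.card_powersetCard, Finset.card_erase_of_mem (Finset.mem_univ v),
    Finset.card_univ, Fintype.card_fin]

lemma n_mul_A {n k : ℕ} (hk : 1 ≤ k) (hkn : k ≤ n) (v : Fin n) :
    n * (((Finset.univ : Finset (Fin n)).powersetCard k).filter (fun e => v ∈ e)).card
      = k * n.choose k := by
  rw [card_edges_mem hk v]
  obtain ⟨n', rfl⟩ : ∃ n', n = n' + 1 := ⟨n - 1, by omega⟩
  obtain ⟨k', rfl⟩ : ∃ k', k = k' + 1 := ⟨k - 1, by omega⟩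
  simp only [Nat.add_sub_cancel]
  simpa [Nat.succ_eq_add_one, Nat.mul_comm] using Nat.add_one_mul_choose_eq n' k'

lemma exp_le_quad {θ : ℝ} (h0 : 0 ≤ θ) (h1 : θ ≤ 1/2) :
    Real.exp θ ≤ 1 + θ + 2 * θ ^ 2 := by
  have h2 : 1 - θ ≤ Real.exp (-θ) := by
    have := Real.add_one_le_exp (-θ); linarith
  have hpos : (0:ℝ) < 1 - θ := by linarith
  have h3 : Real.exp θ ≤ (1 - θ)⁻¹ := by
    rw [Real.exp_neg] at h2
    exact le_inv_of_le_inv₀ hpos h2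
  have h4 : (1 - θ)⁻¹ ≤ 1 + θ + 2 * θ ^ 2 := by
    rw [inv_le_iff_one_le_mul₀ hpos]
    nlinarith
  linarith

lemma cube_lt_exp {y : ℝ} (hy : 0 < y) : y ^ 3 / 27 < Real.exp y := by
  have h1 : y / 3 < Real.exp (y / 3) := by
    have := Real.add_one_le_exp (y / 3); linarith
  have h2 : (y / 3) ^ 3 < Real.exp (y / 3) ^ 3 :=
    pow_lt_pow_left₀ h1 (by linarith) (by norm_num)
  calc y ^ 3 / 27 = (y / 3) ^ 3 := by ring
    _ < Real.exp (y / 3) ^ 3 := h2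
    _ = Real.exp y := by rw [← Real.exp_nat_mul]; norm_num; rw [show (3:ℝ) * (y/3) = y by ring]

/-- Sum over all subsets of x^|s| y^(m-|s|) equals (x+y)^m. -/
lemma sum_powerset_pow {m : ℕ} (x y : ℝ) :
    ∑ s ∈ (Finset.univ : Finset (Fin m)).powerset, x ^ s.card * y ^ (m - s.card)
      = (x + y) ^ m := by
  have h := Finset.prod_add (fun _ : Fin m => x) (fun _ : Fin m => y) Finset.univ
  rw [Finset.prod_const, Finset.card_univ, Fintype.card_fin] at h
  rw [h]
  apply Finset.sum_congr rfl
  intro s hs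
  rw [Finset.mem_powerset] at hs
  rw [Finset.prod_const, Finset.prod_const, Finset.card_sdiff_of_subset hs, Finset.card_univ,
    Fintype.card_fin]

set_option maxHeartbeats 1000000 in
/-- With n = k^{2a} and m = (1-ε)k^{3a-1} random k-subsets of [n] chosen independently
and uniformly, a fixed vertex v lies in more than k^a of them with probability less
than 1/(2n), for k sufficiently large. -/
theorem stmt15 (a ε : ℝ) (ha : 1 ≤ a) (hε0 : 0 < ε) (hε1 : ε < 1) :
    ∃ k0 : ℕ, ∀ k : ℕ, k ≥ k0 → ∀ n m : ℕ,
      (n : ℝ) = (k : ℝ) ^ (2 * a) → (m : ℝ) = (1 - ε) * (k : ℝ) ^ (3 * a - 1) →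
      ∀ v : Fin n,
        (Measure.pi fun _ : Fin m => uniformEdge n k)
            {ω : Fin m → Finset (Fin n) |
              (k : ℝ) ^ a < ((Finset.univ.filter fun i => v ∈ ω i).card : ℝ)}
          < ENNReal.ofReal (1 / (2 * n)) := by
  classical
  refine ⟨⌈27648 / ε ^ 6⌉₊ + 2, fun k hk n m hn hm v => ?_⟩
  -- basic numerics
  have hk2 : 2 ≤ k := by omega
  have hkR : (2:ℝ) ≤ (k:ℝ) := by exact_mod_cast hk2
  have hkpos : (0:ℝ) < (k:ℝ) := by linarith
  have hk1R : (1:ℝ) ≤ (k:ℝ) := by linarith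
  set T : ℝ := (k:ℝ) ^ a with hTdef
  have hTpos : 0 < T := Real.rpow_pos_of_pos hkpos a
  have hTk : (k:ℝ) ≤ T := by
    calc (k:ℝ) = (k:ℝ) ^ (1:ℝ) := (Real.rpow_one _).symm
    _ ≤ (k:ℝ) ^ a := Real.rpow_le_rpow_of_exponent_le hk1R ha
  have hnT : (n:ℝ) = T ^ 2 := by
    rw [hn, hTdef, ← Real.rpow_natCast ((k:ℝ)^a) 2, ← Real.rpow_mul (le_of_lt hkpos)]
    norm_num
    rw [mul_comm]
  have hnpos : (0:ℝ) < (n:ℝ) := by rw [hnT]; positivity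
  have hkn : k ≤ n := by
    have : (k:ℝ) ≤ (n:ℝ) := by
      rw [hnT]
      nlinarith
    exact_mod_cast this
  have hk1 : 1 ≤ k := by omega
  -- combinatorial setup
  set E := (Finset.univ : Finset (Fin n)).powersetCard k with hE
  set C := E.card with hC
  have hCchoose : C = n.choose k := by
    rw [hC, hE, Finset.card_powersetCard, Finset.card_univ, Fintype.card_fin]
  have hCpos : 0 < C := by rw [hCchoose]; exact Nat.choose_pos hkn
  set Ev := E.filter (fun e => v ∈ e) with hEv
  set En := E.filter (fun e => ¬ v ∈ e) with hEn
  set A := Ev.card with hA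
  set B := En.card with hB
  have hABC : A + B = C := Finset.card_filter_add_card_filter_not _
  have hnA : n * A = k * C := by rw [hCchoose]; exact n_mul_A hk1 hkn v
  set S := {ω : Fin m → Finset (Fin n) |
      (k : ℝ) ^ a < ((Finset.univ.filter fun i => v ∈ ω i).card : ℝ)} with hS
  set c : ENNReal := ((C:ℕ) : ENNReal)⁻¹ with hc
  set G := (Finset.univ.filter (· ∈ S)).filter (fun ω => ∀ i, ω i ∈ E) with hG
  -- Step A : measure = G.card * c^m
  have stepA : (Measure.pi fun _ : Fin m => uniformEdge n k) S = (G.card : ENNReal) * c ^ m := by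
    rw [pi_measure_eq n k m S]
    have h1 : ∀ ω : Fin m → Finset (Fin n),
        (∏ i, uniformEdge n k {ω i}) = if (∀ i, ω i ∈ E) then c ^ m else 0 := by
      intro ω
      by_cases h : ∀ i, ω i ∈ E
      · rw [if_pos h]
        rw [Finset.prod_congr rfl (fun i _ => by
          rw [uniformEdge_singleton, if_pos (h i)])]
        rw [Finset.prod_const, Finset.card_univ, Fintype.card_fin]
      · rw [if_neg h]
        push_neg at h
        obtain ⟨i, hi⟩ := h
        apply Finset.prod_eq_zero (Finset.mem_univ i)
        rw [uniformEdge_singleton, if_neg hi]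
    rw [Finset.sum_congr rfl (fun ω _ => h1 ω), ← Finset.sum_filter, ← hG,
      Finset.sum_const, nsmul_eq_mul]
  -- Step B : counting by fibers
  set t := (Finset.univ : Finset (Fin m)).powerset.filter
      (fun s => (k:ℝ)^a < (s.card : ℝ)) with ht
  have stepB : G.card = ∑ s ∈ t, A ^ s.card * B ^ (m - s.card) := by
    rw [Finset.card_eq_sum_card_fiberwise
      (f := fun ω => Finset.univ.filter (fun i => v ∈ ω i)) (t := t) ?_]
    · refine Finset.sum_congr rfl fun s hs => ?_
      rw [ht, Finset.mem_filter, Finset.mem_powerset] at hs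
      have hfib : G.filter (fun ω => Finset.univ.filter (fun i => v ∈ ω i) = s)
          = Fintype.piFinset (fun i => if i ∈ s then Ev else En) := by
        ext ω
        simp only [hG, Finset.mem_filter, Finset.mem_univ, true_and,
          Fintype.mem_piFinset, hS, Set.mem_setOf_eq]
        constructor
        · rintro ⟨⟨hωS, hωE⟩, hfil⟩ i
          by_cases hi : i ∈ s
          · rw [if_pos hi, hEv, Finset.mem_filter]
            refine ⟨hωE i, ?_⟩
            have h2 : i ∈ Finset.univ.filter (fun i => v ∈ ω i) := hfil ▸ hi
            simpa using h2
          · rw [if_neg hi, hEn, Finset.mem_filter]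
            refine ⟨hωE i, fun hv => hi ?_⟩
            rw [← hfil]; simpa using hv
        · intro h
          have hωE : ∀ i, ω i ∈ E := by
            intro i
            have h2 := h i
            by_cases hi : i ∈ s
            · rw [if_pos hi, hEv, Finset.mem_filter] at h2; exact h2.1
            · rw [if_neg hi, hEn, Finset.mem_filter] at h2; exact h2.1
          have hfil : Finset.univ.filter (fun i => v ∈ ω i) = s := by
            ext i
            simp only [Finset.mem_filter, Finset.mem_univ, true_and]
            constructor
            · intro hv
              by_contra hi
              have h2 := h i
              rw [if_neg hi, hEn, Finset.mem_filter] at h2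
              exact h2.2 hv
            · intro hi
              have h2 := h i
              rw [if_pos hi, hEv, Finset.mem_filter] at h2
              exact h2.2
          exact ⟨⟨by rw [hfil]; exact hs.2, hωE⟩, hfil⟩
      rw [hfib, Fintype.card_piFinset, ← Finset.prod_mul_prod_compl s]
      have h1 : ∏ i ∈ s, (if i ∈ s then Ev else En).card = A ^ s.card := by
        rw [Finset.prod_congr rfl (g := fun _ => A) (fun i hi => by rw [if_pos hi]),
          Finset.prod_const]
      have h2 : ∏ i ∈ sᶜ, (if i ∈ s then Ev else En).card = B ^ (m - s.card) := by
        rw [Finset.prod_congr rfl (g := fun _ => B)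
            (fun i hi => by rw [if_neg (Finset.mem_compl.mp hi)]),
          Finset.prod_const, Finset.card_compl, Fintype.card_fin]
      rw [h1, h2]
    · intro ω hω
      rw [hG, Finset.mem_coe, Finset.mem_filter, Finset.mem_filter] at hω
      rw [ht, Finset.mem_coe, Finset.mem_filter, Finset.mem_powerset]
      refine ⟨Finset.subset_univ _, ?_⟩
      have := hω.1.2
      rw [hS, Set.mem_setOf_eq] at this
      exact this
  -- Step C : to ofReal
  have hCRpos : (0:ℝ) < (C:ℝ) := by exact_mod_cast hCpos
  have hcm : c ^ m = ENNReal.ofReal (((C:ℝ) ^ m)⁻¹) := by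
    rw [hc, ← ENNReal.ofReal_natCast C, ← ENNReal.ofReal_inv_of_pos hCRpos,
      ← ENNReal.ofReal_pow (by positivity), inv_pow]
  have stepC : (Measure.pi fun _ : Fin m => uniformEdge n k) S
      = ENNReal.ofReal ((G.card : ℝ) * (((C:ℝ)) ^ m)⁻¹) := by
    rw [stepA, hcm, ← ENNReal.ofReal_natCast G.card,
      ← ENNReal.ofReal_mul (by positivity)]
  -- Step D : real sum
  set p : ℝ := (A:ℝ) / C with hp
  set q : ℝ := (B:ℝ) / C with hq
  have hp0 : 0 ≤ p := by positivity
  have hq0 : 0 ≤ q := by positivity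
  have hpq : p + q = 1 := by
    rw [hp, hq, ← add_div, ← Nat.cast_add, hABC, div_self (ne_of_gt hCRpos)]
  have hpkn : p = (k:ℝ) / n := by
    have h2 : (n:ℝ) * A = (k:ℝ) * C := by exact_mod_cast hnA
    rw [hp, div_eq_div_iff (ne_of_gt hCRpos) (ne_of_gt hnpos)]
    linarith
  have stepD : (G.card : ℝ) * (((C:ℝ)) ^ m)⁻¹ = ∑ s ∈ t, p ^ s.card * q ^ (m - s.card) := by
    rw [stepB]
    push_cast
    rw [Finset.sum_mul]
    refine Finset.sum_congr rfl fun s hs => ?_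
    rw [ht, Finset.mem_filter, Finset.mem_powerset] at hs
    have hsm : s.card ≤ m := by
      have h2 := Finset.card_le_card hs.1
      simpa using h2
    rw [hp, hq, div_pow, div_pow, div_mul_div_comm, ← pow_add,
      Nat.add_sub_cancel' hsm, div_eq_mul_inv]
  -- Step E : Chernoff
  set θ : ℝ := ε / 4 with hθ
  have hθ0 : 0 < θ := by rw [hθ]; linarith
  have hθhalf : θ ≤ 1/2 := by rw [hθ]; linarith
  have stepE : ∑ s ∈ t, p ^ s.card * q ^ (m - s.card)
      ≤ Real.exp (-(θ * T)) * (p * Real.exp θ + q) ^ m := by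
    calc ∑ s ∈ t, p ^ s.card * q ^ (m - s.card)
        ≤ ∑ s ∈ t, Real.exp (-(θ*T)) * ((p * Real.exp θ) ^ s.card * q ^ (m - s.card)) := by
          refine Finset.sum_le_sum fun s hs => ?_
          rw [ht, Finset.mem_filter] at hs
          have hTs : T ≤ (s.card:ℝ) := le_of_lt hs.2
          have h1 : 1 ≤ Real.exp (θ * ((s.card:ℝ) - T)) := by
            rw [← Real.exp_zero]
            exact Real.exp_le_exp.mpr (by nlinarith)
          have hterm : 0 ≤ p ^ s.card * q ^ (m - s.card) :=
            mul_nonneg (pow_nonneg hp0 _) (pow_nonneg hq0 _)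
          calc p ^ s.card * q ^ (m - s.card)
              ≤ Real.exp (θ * ((s.card:ℝ) - T)) * (p ^ s.card * q ^ (m - s.card)) := by
                nlinarith
            _ = Real.exp (-(θ*T)) * ((p * Real.exp θ) ^ s.card * q ^ (m - s.card)) := by
                rw [mul_pow, ← Real.exp_nat_mul,
                  show θ * ((s.card:ℝ) - T) = (s.card:ℝ)*θ + -(θ*T) by ring, Real.exp_add]
                ring
      _ ≤ ∑ s ∈ (Finset.univ : Finset (Fin m)).powerset,
            Real.exp (-(θ*T)) * ((p * Real.exp θ) ^ s.card * q ^ (m - s.card)) := by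
          refine Finset.sum_le_sum_of_subset_of_nonneg (ht ▸ Finset.filter_subset _ _)
            fun s _ _ => ?_
          exact mul_nonneg (Real.exp_pos _).le
            (mul_nonneg (pow_nonneg (mul_nonneg hp0 (Real.exp_pos _).le) _) (pow_nonneg hq0 _))
      _ = Real.exp (-(θ*T)) * (p * Real.exp θ + q) ^ m := by
          rw [← Finset.mul_sum, sum_powerset_pow]
  -- Step F
  have stepF : (p * Real.exp θ + q) ^ m ≤ Real.exp ((1 - ε) * T * (Real.exp θ - 1)) := by
    have hmp : (m:ℝ) * p = (1 - ε) * T := by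
      rw [hm, hpkn, hn, hTdef,
        show (k:ℝ) / (k:ℝ)^(2*a) = (k:ℝ)^(1 - 2*a) by
          rw [Real.rpow_sub hkpos, Real.rpow_one],
        mul_assoc, ← Real.rpow_add hkpos,
        show 3*a - 1 + (1 - 2*a) = a by ring]
    have h1 : p * Real.exp θ + q = 1 + p * (Real.exp θ - 1) := by
      rw [show (1:ℝ) + p * (Real.exp θ - 1) = p * Real.exp θ + (1 - p) by ring, ← hpq]
      ring
    have hexpθ1 : (1:ℝ) ≤ Real.exp θ := by
      rw [← Real.exp_zero]; exact Real.exp_le_exp.mpr (le_of_lt hθ0)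
    have h2 : (0:ℝ) ≤ 1 + p * (Real.exp θ - 1) := by nlinarith
    have h3 : 1 + p * (Real.exp θ - 1) ≤ Real.exp (p * (Real.exp θ - 1)) := by
      have := Real.add_one_le_exp (p * (Real.exp θ - 1)); linarith
    calc (p * Real.exp θ + q) ^ m ≤ Real.exp (p * (Real.exp θ - 1)) ^ m := by
          rw [h1]; exact pow_le_pow_left₀ h2 h3 m
      _ = Real.exp ((m:ℝ) * (p * (Real.exp θ - 1))) := by rw [← Real.exp_nat_mul]
      _ = Real.exp ((1 - ε) * T * (Real.exp θ - 1)) := by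
          rw [← mul_assoc, hmp]
  -- Step G : final numeric bound
  have hexpbound : Real.exp (-(θ * T)) * Real.exp ((1 - ε) * T * (Real.exp θ - 1))
      < 1 / (2 * (n:ℝ)) := by
    rw [← Real.exp_add]
    have hX : (1 - ε) * (Real.exp θ - 1) - θ ≤ -(ε^2/8) := by
      have := exp_le_quad (le_of_lt hθ0) hθhalf
      rw [hθ] at this ⊢
      nlinarith
    have h1 : -(θ*T) + (1-ε)*T*(Real.exp θ - 1) ≤ T * (-(ε^2/8)) := by nlinarith
    have h2 : Real.exp (T * (-(ε^2/8))) < 1/(2*(n:ℝ)) := by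
      rw [hnT]
      have hy : 0 < ε^2*T/8 := by positivity
      have hcube := cube_lt_exp hy
      have hT27 : 27648 / ε^6 ≤ T := by
        have h3 : (⌈27648 / ε ^ 6⌉₊ : ℝ) ≤ (k:ℝ) := by
          have : (⌈27648 / ε ^ 6⌉₊ : ℕ) ≤ k := by omega
          exact_mod_cast this
        calc 27648 / ε^6 ≤ (⌈27648 / ε ^ 6⌉₊ : ℝ) := Nat.le_ceil _
          _ ≤ (k:ℝ) := h3
          _ ≤ T := hTk
      have h2T : 2 * T^2 < Real.exp (ε^2*T/8) := by
        refine lt_of_le_of_lt ?_ hcube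
        have h27 : 27648 ≤ ε^6 * T := by
          rw [div_le_iff₀ (by positivity)] at hT27; linarith
        nlinarith [mul_le_mul_of_nonneg_right h27 (sq_nonneg T), hTpos]
      rw [show T * (-(ε^2/8)) = -(ε^2*T/8) by ring, Real.exp_neg, one_div]
      rw [show (2:ℝ) * T^2 = 2*T^2 by ring]
      exact inv_strictAnti₀ (by positivity) h2T
    calc Real.exp (-(θ*T) + (1-ε)*T*(Real.exp θ - 1))
        ≤ Real.exp (T * (-(ε^2/8))) := Real.exp_le_exp.mpr h1
      _ < 1/(2*(n:ℝ)) := h2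
  -- assemble
  have hfinal : (G.card : ℝ) * (((C:ℝ)) ^ m)⁻¹
      ≤ Real.exp (-(θ*T)) * Real.exp ((1-ε)*T*(Real.exp θ - 1)) := by
    rw [stepD]
    calc ∑ s ∈ t, p ^ s.card * q ^ (m - s.card)
        ≤ Real.exp (-(θ * T)) * (p * Real.exp θ + q) ^ m := stepE
      _ ≤ Real.exp (-(θ*T)) * Real.exp ((1-ε)*T*(Real.exp θ - 1)) :=
          mul_le_mul_of_nonneg_left stepF (Real.exp_pos _).le
  rw [stepC]
  calc ENNReal.ofReal ((G.card : ℝ) * (((C:ℝ)) ^ m)⁻¹)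
      ≤ ENNReal.ofReal (Real.exp (-(θ*T)) * Real.exp ((1-ε)*T*(Real.exp θ - 1))) :=
        ENNReal.ofReal_le_ofReal hfinal
    _ < ENNReal.ofReal (1 / (2 * (n:ℝ))) := by
        rw [ENNReal.ofReal_lt_ofReal_iff (by positivity)]
        exact hexpbound
end
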